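/- If f belongs to the class S*_B, then the second-order Toeplitz determinant of its logarithmic coefficients satisfies |γ_1² − γ_2²| ≤ 17/64; equivalently, |4·a_2² − a_2⁴ − 4·a_3² + 4·a_2²·a_3| ≤ 17/4, where γ_1 = a_2/2 and γ_2 = (a_3 − a_2²/2)/2. -/

import Mathlib

/-!
Write the Schwarz function as `w z = c₁ z + c₂ z² + ⋯`. Comparing Taylor coefficients in
`f = z f' (1 - log (1 + w))` gives `a₂ = c₁` and `a₃ = (3 c₁² + 2 c₂) / 4`, so that
`4 a₂² - a₂⁴ - 4 a₃² + 4 a₂² a₃ = 4 c₁² - c₁⁴ / 4 - c₁² c₂ - c₂²`. The Schwarz lemma sends `w z / z`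
into the closed unit disc, and Schwarz–Pick at the origin for that map gives `|c₂| ≤ 1 - |c₁|²`.
The triangle inequality then bounds the expression by `3 |c₁|² + |c₁|⁴ / 4 + 1 ≤ 17 / 4`.
-/

open Complex Metric

/-- The `n`-th Taylor coefficient of `f` at `0`. -/
noncomputable def taylorCoeff (f : ℂ → ℂ) (n : ℕ) : ℂ :=
  iteratedDeriv n f 0 / n.factorial

/-- Membership in the class `S*_B`: `f` is analytic on the unit disk, normalized by
`f(0) = 0` and `f'(0) = 1`, and there is a Schwarz function `w` with
`z f'(z) (1 - log(1 + w z)) = f z` on the unit disk. -/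
def IsSB (f : ℂ → ℂ) : Prop :=
  DifferentiableOn ℂ f (ball (0:ℂ) 1) ∧ f 0 = 0 ∧ deriv f 0 = 1 ∧
  ∃ w : ℂ → ℂ, DifferentiableOn ℂ w (ball (0:ℂ) 1) ∧ w 0 = 0 ∧
    (∀ z ∈ ball (0:ℂ) 1, ‖w z‖ < 1) ∧
    (∀ z ∈ ball (0:ℂ) 1, z * deriv f z * (1 - Complex.log (1 + w z)) = f z)

open Filter Topology Finset ComplexConjugate

lemma taylorCoeff_zero (f : ℂ → ℂ) : taylorCoeff f 0 = f 0 := by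
  simp [taylorCoeff]

lemma taylorCoeff_one (f : ℂ → ℂ) : taylorCoeff f 1 = deriv f 0 := by
  simp [taylorCoeff]

lemma taylorCoeff_deriv (f : ℂ → ℂ) (n : ℕ) :
    taylorCoeff (deriv f) n = (n + 1) * taylorCoeff f (n + 1) := by
  simp only [taylorCoeff, iteratedDeriv_succ', Nat.factorial_succ]
  push_cast
  field_simp

lemma Filter.EventuallyEq.taylorCoeff_eq {f g : ℂ → ℂ} (h : f =ᶠ[𝓝 0] g) (n : ℕ) :
    taylorCoeff f n = taylorCoeff g n := by
  rw [taylorCoeff, taylorCoeff, h.iteratedDeriv_eq]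

lemma taylorCoeff_const_sub {n : ℕ} (hn : 0 < n) (c : ℂ) (f : ℂ → ℂ) :
    taylorCoeff (fun z => c - f z) n = -taylorCoeff f n := by
  simp [taylorCoeff, iteratedDeriv_const_sub hn, neg_div]

lemma taylorCoeff_const_add {n : ℕ} (hn : 0 < n) (c : ℂ) (f : ℂ → ℂ) :
    taylorCoeff (fun z => c + f z) n = taylorCoeff f n := by
  simp [taylorCoeff, iteratedDeriv_const_add hn]

lemma taylorCoeff_mul {f g : ℂ → ℂ} {n : ℕ} (hf : ContDiffAt ℂ n f 0) (hg : ContDiffAt ℂ n g 0) :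
    taylorCoeff (fun z => f z * g z) n =
      ∑ i ∈ range (n + 1), taylorCoeff f i * taylorCoeff g (n - i) := by
  rw [taylorCoeff, iteratedDeriv_fun_mul hf hg, sum_div]
  refine sum_congr rfl fun i hi => ?_
  have hin : i ≤ n := Nat.lt_succ_iff.mp (mem_range.mp hi)
  have hn : (n.factorial : ℂ) ≠ 0 := by exact_mod_cast n.factorial_ne_zero
  rw [taylorCoeff, taylorCoeff, Nat.cast_choose ℂ hin]
  field_simp

lemma taylorCoeff_id_mul {g : ℂ → ℂ} {n : ℕ} (hg : ContDiffAt ℂ (n + 1) g 0) :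
    taylorCoeff (fun z => z * g z) (n + 1) = taylorCoeff g n := by
  have hid : ∀ i, taylorCoeff (fun z => z) i = if i = 1 then 1 else 0 := fun i => by
    rcases eq_or_ne i 1 with rfl | hi <;> simp [taylorCoeff, iteratedDeriv_fun_id_zero, *]
  rw [taylorCoeff_mul (by fun_prop) (by exact_mod_cast hg)]
  simp [hid]

lemma taylorCoeff_log_one_add {w : ℂ → ℂ} (hw : AnalyticAt ℂ w 0) (hw0 : w 0 = 0) :
    taylorCoeff (fun z => log (1 + w z)) 1 = taylorCoeff w 1 ∧
      taylorCoeff (fun z => log (1 + w z)) 2 = taylorCoeff w 2 - taylorCoeff w 1 ^ 2 / 2 := by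
  set L : ℂ → ℂ := fun z => log (1 + w z)
  have hslit : ∀ᶠ z in 𝓝 0, 1 + w z ∈ slitPlane :=
    (hw.continuousAt.const_add 1).eventually_mem (isOpen_slitPlane.mem_nhds (by simp [hw0]))
  have hL : AnalyticAt ℂ L 0 := (analyticAt_const.add hw).clog (by simp [hw0])
  have hderiv : (fun z => deriv L z * (1 + w z)) =ᶠ[𝓝 0] deriv w := by
    filter_upwards [hslit, hw.eventually_analyticAt] with z hz hwz
    rw [((hwz.differentiableAt.hasDerivAt.const_add 1).clog hz).deriv]
    field_simp [slitPlane_ne_zero hz]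
  have hcoeff (n : ℕ) := (hderiv.taylorCoeff_eq n).symm.trans
    (taylorCoeff_mul (n := n) hL.deriv.contDiffAt (analyticAt_const.add hw).contDiffAt)
  have e0 : taylorCoeff (fun z => 1 + w z) 0 = 1 := by simp [taylorCoeff_zero, hw0]
  have e1 : taylorCoeff (fun z => 1 + w z) 1 = taylorCoeff w 1 := taylorCoeff_const_add one_pos 1 w
  have h0 := hcoeff 0
  have h1 := hcoeff 1
  norm_num [sum_range_succ, taylorCoeff_deriv, e0, e1] at h0 h1
  exact ⟨h0.symm, by linear_combination taylorCoeff w 1 * h0 / 2 - h1 / 2⟩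

lemma taylorCoeff_two_three_of_eq_id_mul_deriv_mul {f P : ℂ → ℂ} (hf : AnalyticAt ℂ f 0)
    (hP : AnalyticAt ℂ P 0) (hf1 : deriv f 0 = 1) (hP0 : P 0 = 1)
    (h : f =ᶠ[𝓝 0] fun z => z * (deriv f z * P z)) :
    taylorCoeff f 2 = -taylorCoeff P 1 ∧
      taylorCoeff f 3 = taylorCoeff P 1 ^ 2 - taylorCoeff P 2 / 2 := by
  have hcoeff (n : ℕ) : taylorCoeff f (n + 1) =
      ∑ i ∈ range (n + 1), taylorCoeff (deriv f) i * taylorCoeff P (n - i) := by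
    have hQ : AnalyticAt ℂ (fun z => deriv f z * P z) 0 := hf.deriv.mul hP
    rw [h.taylorCoeff_eq, taylorCoeff_id_mul hQ.contDiffAt,
      taylorCoeff_mul hf.deriv.contDiffAt hP.contDiffAt]
  have h1 := hcoeff 1
  have h2 := hcoeff 2
  norm_num [sum_range_succ, taylorCoeff_deriv, taylorCoeff_zero, taylorCoeff_one, hf1, hP0] at h1 h2
  rw [taylorCoeff_one]
  exact ⟨by linear_combination -h1, by linear_combination deriv P 0 * h1 - h2 / 2⟩

lemma norm_sub_le_norm_one_sub_conj_mul {a b : ℂ} (ha : ‖a‖ ≤ 1) (hb : ‖b‖ ≤ 1) :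
    ‖a - b‖ ≤ ‖1 - conj b * a‖ := by
  have key : normSq (1 - conj b * a) - normSq (a - b) = (1 - normSq a) * (1 - normSq b) := by
    simp only [normSq_apply, sub_re, sub_im, mul_re, mul_im, one_re, one_im, conj_re, conj_im]
    ring
  have ha' : normSq a ≤ 1 := by rw [normSq_eq_norm_sq]; nlinarith [norm_nonneg a]
  have hb' : normSq b ≤ 1 := by rw [normSq_eq_norm_sq]; nlinarith [norm_nonneg b]
  rw [norm_def, norm_def]
  gcongr
  nlinarith [mul_nonneg (sub_nonneg.mpr ha') (sub_nonneg.mpr hb')]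

-- Schwarz's lemma for `g` followed by the disc automorphism that sends `g 0` to `0`.
lemma norm_deriv_zero_le_one_sub_sq_norm_of_norm_lt_one {g : ℂ → ℂ}
    (hg : DifferentiableOn ℂ g (ball 0 1)) (hmaps : Set.MapsTo g (ball 0 1) (closedBall 0 1))
    (hlt : ‖g 0‖ < 1) : ‖deriv g 0‖ ≤ 1 - ‖g 0‖ ^ 2 := by
  have h0 : (0 : ℂ) ∈ ball (0 : ℂ) 1 := mem_ball_self one_pos
  set b := g 0 with hb
  have hden : ∀ z ∈ ball (0 : ℂ) 1, 1 - conj b * g z ≠ 0 := fun z hz => by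
    have : ‖conj b * g z‖ < 1 := by
      rw [norm_mul, norm_conj]
      nlinarith [norm_nonneg b, show ‖g z‖ ≤ 1 by simpa using hmaps hz]
    exact sub_ne_zero.mpr fun h => by simp [← h] at this
  set φ : ℂ → ℂ := fun z => (g z - b) / (1 - conj b * g z)
  have hφ : DifferentiableOn ℂ φ (ball 0 1) :=
    (hg.sub_const b).div ((differentiableOn_const 1).sub (hg.const_mul _)) hden
  have hφmaps : Set.MapsTo φ (ball 0 1) (closedBall (φ 0) 1) := fun z hz => by
    have hφ0 : φ 0 = 0 := by simp [φ, b]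
    rw [hφ0, mem_closedBall_zero_iff, norm_div, div_le_one (norm_pos_iff.mpr (hden z hz))]
    exact norm_sub_le_norm_one_sub_conj_mul (by simpa using hmaps hz) hlt.le
  have hb2 : 1 - conj b * b = ((1 - ‖b‖ ^ 2 : ℝ) : ℂ) := by push_cast [conj_mul']; rfl
  have hgd : HasDerivAt g (deriv g 0) 0 :=
    (hg.differentiableAt (ball_mem_nhds 0 one_pos)).hasDerivAt
  have hφ' : deriv φ 0 = deriv g 0 / (1 - ‖b‖ ^ 2 : ℝ) := by
    rw [((hgd.sub_const b).fun_div ((hgd.const_mul _).const_sub 1) (hden 0 h0)).deriv, ← hb,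
      ← hb2]
    have hne : 1 - conj b * b ≠ 0 := hden 0 h0
    field_simp
    ring
  have hpos : 0 < 1 - ‖b‖ ^ 2 := by nlinarith [norm_nonneg b]
  have := norm_deriv_le_one_of_mapsTo_ball hφ hφmaps one_pos
  rwa [hφ', norm_div, norm_real, Real.norm_of_nonneg hpos.le, div_le_one hpos] at this

theorem norm_deriv_zero_le_one_sub_sq_norm {g : ℂ → ℂ} (hg : DifferentiableOn ℂ g (ball 0 1))
    (hmaps : Set.MapsTo g (ball 0 1) (closedBall 0 1)) : ‖deriv g 0‖ ≤ 1 - ‖g 0‖ ^ 2 := by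
  have h0 : (0 : ℂ) ∈ ball (0 : ℂ) 1 := mem_ball_self one_pos
  rcases (show ‖g 0‖ ≤ 1 by simpa using hmaps h0).lt_or_eq with hlt | heq
  · exact norm_deriv_zero_le_one_sub_sq_norm_of_norm_lt_one hg hmaps hlt
  · have hconst : Set.EqOn g (fun _ => g 0) (ball 0 1) :=
      eqOn_of_isPreconnected_of_isMaxOn_norm (convex_ball 0 1).isPreconnected isOpen_ball hg h0
        fun z hz => by simpa [heq] using hmaps hz
    rw [(hconst.eventuallyEq_of_mem (ball_mem_nhds 0 one_pos)).deriv_eq, heq]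
    simp

lemma norm_taylorCoeff_two_le_of_mapsTo_ball {w : ℂ → ℂ} (hw : DifferentiableOn ℂ w (ball 0 1))
    (hw0 : w 0 = 0) (hmaps : Set.MapsTo w (ball 0 1) (ball 0 1)) :
    ‖taylorCoeff w 2‖ ≤ 1 - ‖taylorCoeff w 1‖ ^ 2 := by
  set g := dslope w 0
  have hg : DifferentiableOn ℂ g (ball 0 1) :=
    (differentiableOn_dslope (ball_mem_nhds 0 one_pos)).mpr hw
  have hgmaps : Set.MapsTo g (ball 0 1) (closedBall 0 1) := fun z hz => by
    have hw' : Set.MapsTo w (ball 0 1) (closedBall (w 0) 1) := by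
      rw [hw0]; exact hmaps.mono_right ball_subset_closedBall
    simpa using norm_dslope_le_div_of_mapsTo_ball hw hw' hz
  have hwg : w = fun z => z * g z :=
    funext fun z => by simpa [hw0] using (sub_smul_dslope w 0 z).symm
  have h1 : taylorCoeff w 1 = g 0 := (taylorCoeff_one w).trans (dslope_same w 0).symm
  have h2 : taylorCoeff w 2 = deriv g 0 := by
    rw [hwg, taylorCoeff_id_mul (hg.analyticAt (ball_mem_nhds 0 one_pos)).contDiffAt,
      taylorCoeff_one]
  rw [h1, h2]
  exact norm_deriv_zero_le_one_sub_sq_norm hg hgmaps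

lemma norm_toeplitz_schwarz_le {c₁ c₂ : ℂ} (h : ‖c₂‖ ≤ 1 - ‖c₁‖ ^ 2) :
    ‖4 * c₁ ^ 2 - c₁ ^ 4 / 4 - c₁ ^ 2 * c₂ - c₂ ^ 2‖ ≤ 17 / 4 := by
  have hx1 : ‖c₁‖ ^ 2 ≤ 1 := by linarith [norm_nonneg c₂]
  calc ‖4 * c₁ ^ 2 - c₁ ^ 4 / 4 - c₁ ^ 2 * c₂ - c₂ ^ 2‖
      ≤ ‖4 * c₁ ^ 2‖ + ‖c₁ ^ 4 / 4‖ + ‖c₁ ^ 2 * c₂‖ + ‖c₂ ^ 2‖ := by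
        refine (norm_sub_le _ _).trans ?_
        gcongr
        refine (norm_sub_le _ _).trans ?_
        gcongr
        exact norm_sub_le _ _
    _ = 4 * ‖c₁‖ ^ 2 + (‖c₁‖ ^ 2) ^ 2 / 4 + ‖c₁‖ ^ 2 * ‖c₂‖ + ‖c₂‖ ^ 2 := by
        simp only [norm_mul, norm_div, norm_pow]
        norm_num
        ring
    _ ≤ 17 / 4 := by nlinarith [norm_nonneg c₁, norm_nonneg c₂, sq_nonneg (‖c₁‖ ^ 2)]

theorem toeplitz_log_coeff (f : ℂ → ℂ) (hf : IsSB f) :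
    ‖(taylorCoeff f 2 / 2) ^ 2 -
        ((taylorCoeff f 3 - (taylorCoeff f 2) ^ 2 / 2) / 2) ^ 2‖ ≤ 17 / 64 ∧
    ‖4 * (taylorCoeff f 2) ^ 2 - (taylorCoeff f 2) ^ 4 -
        4 * (taylorCoeff f 3) ^ 2 + 4 * (taylorCoeff f 2) ^ 2 * taylorCoeff f 3‖ ≤ 17 / 4 := by
  obtain ⟨hfd, -, hf1, w, hwd, hw0, hwb, heqn⟩ := hf
  have hfa : AnalyticAt ℂ f 0 := hfd.analyticAt (ball_mem_nhds 0 one_pos)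
  have hwa : AnalyticAt ℂ w 0 := hwd.analyticAt (ball_mem_nhds 0 one_pos)
  have hP : AnalyticAt ℂ (fun z => 1 - log (1 + w z)) 0 :=
    analyticAt_const.sub ((analyticAt_const.add hwa).clog (by simp [hw0]))
  have hrel : f =ᶠ[𝓝 0] fun z => z * (deriv f z * (1 - log (1 + w z))) := by
    filter_upwards [ball_mem_nhds 0 one_pos] with z hz
    rw [← mul_assoc, heqn z hz]
  obtain ⟨ha₂, ha₃⟩ :=
    taylorCoeff_two_three_of_eq_id_mul_deriv_mul hfa hP hf1 (by simp [hw0]) hrel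
  obtain ⟨hL₁, hL₂⟩ := taylorCoeff_log_one_add hwa hw0
  simp only [taylorCoeff_const_sub one_pos, taylorCoeff_const_sub two_pos, hL₁, hL₂] at ha₂ ha₃
  have hbound := norm_toeplitz_schwarz_le
    (norm_taylorCoeff_two_le_of_mapsTo_ball hwd hw0 fun z hz => by simpa using hwb z hz)
  have hE : 4 * (taylorCoeff f 2) ^ 2 - (taylorCoeff f 2) ^ 4 - 4 * (taylorCoeff f 3) ^ 2 +
      4 * (taylorCoeff f 2) ^ 2 * taylorCoeff f 3 = 4 * taylorCoeff w 1 ^ 2 -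
        taylorCoeff w 1 ^ 4 / 4 - taylorCoeff w 1 ^ 2 * taylorCoeff w 2 - taylorCoeff w 2 ^ 2 := by
    rw [ha₂, ha₃]
    ring
  refine ⟨?_, hE ▸ hbound⟩
  rw [show ∀ a₂ a₃ : ℂ, (a₂ / 2) ^ 2 - ((a₃ - a₂ ^ 2 / 2) / 2) ^ 2 =
    (4 * a₂ ^ 2 - a₂ ^ 4 - 4 * a₃ ^ 2 + 4 * a₂ ^ 2 * a₃) / 16 from fun _ _ => by ring,
    norm_div, hE]
  norm_num
  linarith
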